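/- Fix b ∈ (0,1) and c > 1. The clip-safe threshold is strictly decreasing in the teacher modal probability: the map p ↦ λ*(p,b,c) is strictly antitone on the interval (max(1/2,b), 1). In particular, at b = 1/2 the derivative of p ↦ λ*(p,1/2,c) is strictly negative for every p ∈ (1/2,1). -/

import Mathlib

/-!
Write `G(p) = log((1-p)/p) - log((1-b)/b)` and `m(p) = log(p/(c-1+p))`. Since
`(1-p)/(c-1+p) = (1-p)/p · p/(c-1+p)`, we have `λ*(p,b,c) = 1 + m(p)/G(p)`. For `b < p < 1` and
`c > 1`, `G` is negative and decreasing while `m` is negative and increasing, so the quotient rule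
gives `(m/G)' = (m'G - mG')/G² < 0`.
-/

open Real

/-- Closed-form clip-safe threshold `λ*(p,b,c)`. -/
noncomputable def lamStar (p b c : ℝ) : ℝ :=
  (Real.log ((1 - p) / (c - 1 + p)) - Real.log ((1 - b) / b)) /
    (Real.log ((1 - p) / p) - Real.log ((1 - b) / b))

open Set

theorem log_one_sub_sub_log_lt_log_odds {b p : ℝ} (hb : 0 < b) (hbp : b < p) (hp : p < 1) :
    log (1 - p) - log p < log ((1 - b) / b) := by
  have hp0 : 0 < p := hb.trans hbp
  have h1p : 0 < 1 - p := by linarith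
  rw [← log_div h1p.ne' hp0.ne']
  refine log_lt_log (div_pos h1p hp0) ?_
  rw [div_lt_div_iff₀ hp0 hb]
  nlinarith

theorem quotient_deriv_neg {m m' g g' : ℝ} (hm : m < 0) (hm' : 0 < m') (hg : g < 0) (hg' : g' < 0) :
    (m' * g - m * g') / g ^ 2 < 0 :=
  div_neg_of_neg_of_pos (by nlinarith [mul_pos_of_neg_of_neg hm hg']) (sq_pos_of_neg hg)

section

variable {b c p : ℝ}

theorem lamStar_eq_one_add (hb : 0 < b) (hbp : b < p) (hp : p < 1) (hc : 1 < c) :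
    lamStar p b c =
      1 + (log p - log (c - 1 + p)) / (log (1 - p) - log p - log ((1 - b) / b)) := by
  have hp0 : 0 < p := hb.trans hbp
  have h1p : 0 < 1 - p := by linarith
  have hG := sub_neg.mpr (log_one_sub_sub_log_lt_log_odds hb hbp hp)
  unfold lamStar
  rw [log_div h1p.ne' (by linarith), log_div h1p.ne' hp0.ne']
  field_simp [hG.ne]
  ring

theorem deriv_lamStar_neg (hb : 0 < b) (hbp : b < p) (hp : p < 1) (hc : 1 < c) :
    deriv (fun x => lamStar x b c) p < 0 := by
  have hp0 : 0 < p := hb.trans hbp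
  have h1p : 0 < 1 - p := by linarith
  have hcp : p < c - 1 + p := by linarith
  set L := log ((1 - b) / b)
  have hm : HasDerivAt (fun x => log x - log (c - 1 + x)) (1 / p - 1 / (c - 1 + p)) p :=
    ((hasDerivAt_id' p).log hp0.ne').sub (((hasDerivAt_id' p).const_add (c - 1)).log (by linarith))
  have hG : HasDerivAt (fun x => log (1 - x) - log x - L) (-1 / (1 - p) - 1 / p) p :=
    ((((hasDerivAt_id' p).const_sub 1).log h1p.ne').sub ((hasDerivAt_id' p).log hp0.ne')).sub_const L
  have hG_neg : log (1 - p) - log p - L < 0 :=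
    sub_neg.mpr (log_one_sub_sub_log_lt_log_odds hb hbp hp)
  have hlam : (fun x => lamStar x b c) =ᶠ[nhds p]
      fun x => 1 + (log x - log (c - 1 + x)) / (log (1 - x) - log x - L) := by
    filter_upwards [Ioo_mem_nhds hbp hp] with x hx using lamStar_eq_one_add hb hx.1 hx.2 hc
  rw [hlam.deriv_eq, ((hm.fun_div hG hG_neg.ne).const_add 1).deriv]
  refine quotient_deriv_neg (sub_neg.mpr (log_lt_log hp0 hcp))
    (sub_pos.mpr (one_div_lt_one_div_of_lt hp0 hcp)) hG_neg ?_
  rw [neg_div]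
  linarith [one_div_pos.mpr hp0, one_div_pos.mpr h1p]

end

theorem lamStar_strictAntiOn_general
    (b c : ℝ) (hb0 : 0 < b) (hc : 1 < c) :
    StrictAntiOn (fun p : ℝ => lamStar p b c) (Set.Ioo (max (1 / 2) b) 1) ∧
      (∀ p : ℝ, 1 / 2 < p → p < 1 →
        deriv (fun x : ℝ => lamStar x (1 / 2) c) p < 0) := by
  have hderiv : ∀ x ∈ Ioo (max (1 / 2) b) 1, deriv (fun p => lamStar p b c) x < 0 :=
    fun x hx => deriv_lamStar_neg hb0 ((le_max_right _ _).trans_lt hx.1) hx.2 hc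
  refine ⟨strictAntiOn_of_deriv_neg (convex_Ioo _ _) (fun x hx => ?_) ?_,
    fun p hp hp1 => deriv_lamStar_neg (by norm_num) hp hp1 hc⟩
  · exact (differentiableAt_of_deriv_ne_zero (hderiv x hx).ne).continuousAt.continuousWithinAt
  · rwa [interior_Ioo]

/-- the clip-safe threshold is strictly decreasing in the teacher modal
probability: `p ↦ λ*(p,b,c)` is strictly antitone on `(max(1/2,b), 1)`; and at
`b = 1/2` its derivative is strictly negative for every `p ∈ (1/2,1)`. -/
theorem lamStar_strictAntiOn
    (b c : ℝ) (hb0 : 0 < b) (hb1 : b < 1) (hc : 1 < c) :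
    StrictAntiOn (fun p : ℝ => lamStar p b c) (Set.Ioo (max (1 / 2) b) 1) ∧
      (∀ p : ℝ, 1 / 2 < p → p < 1 →
        deriv (fun x : ℝ => lamStar x (1 / 2) c) p < 0) :=
  lamStar_strictAntiOn_general b c hb0 hc
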